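/- arXiv:2412.09937 — 7 statements merged into one kernel-verified Lean document; each statement's English description precedes it below -/
import Mathlib

section
/- Let F be a finite field, and let C be a linear code of length n over F with generator matrix G = [I_k | A] in standard form. Then C is a Euclidean LCD code (i.e., C ∩ C^⊥ = {0}) if and only if the matrix I_k + A·Aᵀ is invertible over F. -/
open Matrix

/-- A linear code over a finite field `F` with generator matrix `[I_k | A]` in standard
form is Euclidean LCD iff `I_k + A·Aᵀ` is invertible over `F`. -/
theorem stmt2 {F : Type*} [Field F] [Fintype F] (k m : ℕ)
    (A : Matrix (Fin k) (Fin m) F)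
    (G : Fin k → (Fin k ⊕ Fin m) → F)
    (hG : ∀ i, G i = Sum.elim (fun j => if j = i then (1 : F) else 0) (A i))
    (C : Submodule F ((Fin k ⊕ Fin m) → F))
    (hC : C = Submodule.span F (Set.range G)) :
    ((C : Set ((Fin k ⊕ Fin m) → F)) ∩ {x | ∀ c ∈ C, ∑ j, x j * c j = 0} = {0}) ↔
      IsUnit (1 + A * Aᵀ) := by
  subst hC
  set M : Matrix (Fin k) (Fin k) F := 1 + A * Aᵀ with hM
  have hGl : ∀ i j, G i (Sum.inl j) = if j = i then 1 else 0 := fun i j => by rw [hG]; rfl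
  have hGr : ∀ i j, G i (Sum.inr j) = A i j := fun i j => by rw [hG]; rfl
  have hxl : ∀ (c : Fin k → F) (j : Fin k), (∑ i, c i • G i) (Sum.inl j) = c j := by
    intro c j
    simp [Finset.sum_apply, hGl, mul_ite]
  have hxr : ∀ (c : Fin k → F) (j : Fin m), (∑ i, c i • G i) (Sum.inr j) = ∑ i, c i * A i j := by
    intro c j
    simp [Finset.sum_apply, hGr]
  have key : ∀ (c : Fin k → F) (i : Fin k),
      (∑ j, (∑ i', c i' • G i') j * G i j) = Matrix.vecMul c M i := by
    intro c i
    rw [Fintype.sum_sum_type]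
    simp only [hxl, hxr, hGl, hGr]
    rw [hM]
    simp only [Matrix.vecMul, dotProduct, Matrix.add_apply, Matrix.one_apply,
      Matrix.mul_apply, Matrix.transpose_apply, mul_add, Finset.sum_add_distrib,
      Finset.mul_sum, Finset.sum_mul, mul_ite, mul_one, mul_zero]
    rw [Finset.sum_ite_eq' Finset.univ i c]
    simp only [Finset.mem_univ, if_true]
    congr 1
    rw [Finset.sum_comm]
    apply Finset.sum_congr rfl
    intro j _
    apply Finset.sum_congr rfl
    intro l _
    ring
  have hperp : ∀ (x : (Fin k ⊕ Fin m) → F), (∀ i, ∑ j, x j * G i j = 0) →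
      ∀ c ∈ Submodule.span F (Set.range G), ∑ j, x j * c j = 0 := by
    intro x hx c hc
    induction hc using Submodule.span_induction with
    | mem c hc => obtain ⟨i, rfl⟩ := hc; exact hx i
    | zero => simp
    | add a b _ _ ha hb => simp [mul_add, Finset.sum_add_distrib, ha, hb]
    | smul r a _ ha =>
        simp only [Pi.smul_apply, smul_eq_mul, mul_left_comm, ← Finset.mul_sum, ha, mul_zero]
  constructor
  · intro h
    rw [Matrix.isUnit_iff_isUnit_det, isUnit_iff_ne_zero]
    intro hdet
    obtain ⟨v, hv, hvM⟩ := (Matrix.exists_vecMul_eq_zero_iff).2 hdet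
    set x := ∑ i, v i • G i with hx
    have hxC : x ∈ Submodule.span F (Set.range G) :=
      Submodule.sum_mem _ fun i _ => Submodule.smul_mem _ _ (Submodule.subset_span ⟨i, rfl⟩)
    have hxP : ∀ i, ∑ j, x j * G i j = 0 := by
      intro i
      rw [hx, key v i, hvM]
      rfl
    have hx0 : x = 0 := by
      have : x ∈ ({0} : Set ((Fin k ⊕ Fin m) → F)) := by
        rw [← h]; exact ⟨hxC, hperp x hxP⟩
      simpa using this
    apply hv
    funext j
    have := hxl v j
    rw [← hx, hx0] at this
    simpa using this.symm
  · intro hU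
    ext x
    simp only [Set.mem_inter_iff, Set.mem_singleton_iff, SetLike.mem_coe, Set.mem_setOf_eq]
    constructor
    · rintro ⟨hxC, hxP⟩
      obtain ⟨c, rfl⟩ := (Submodule.mem_span_range_iff_exists_fun F).1 hxC
      have hcM : Matrix.vecMul c M = 0 := by
        funext i
        rw [← key c i]
        exact hxP (G i) (Submodule.subset_span ⟨i, rfl⟩)
      have hc0 : c = 0 := by
        have hdet : IsUnit M.det := (Matrix.isUnit_iff_isUnit_det M).1 hU
        have := congrArg (fun w => Matrix.vecMul w M⁻¹) hcM
        simpa [Matrix.vecMul_vecMul, Matrix.mul_nonsing_inv M hdet] using this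
      subst hc0
      simp
    · rintro rfl
      exact ⟨Submodule.zero_mem _, fun c _ => by simp⟩
end

section
/- Let F be a finite field with automorphism σ, and let C be a linear code of length n over F with generator matrix G (whose rows form a basis of C). Then C ∩ C^{⊥_σ} = {0} if and only if the matrix G·σ(G)ᵀ is invertible over F, where σ(G) denotes entrywise application of σ to G. -/
open Matrix

/-- A linear code `C` over a finite field `F` with generator matrix `G` (rows a basis
of `C`) satisfies `C ∩ C^{⊥_σ} = {0}` iff `G·σ(G)ᵀ` is invertible over `F`. -/
theorem stmt3 {F : Type*} [Field F] [Fintype F] (σ : F ≃+* F) (n k : ℕ)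
    (G : Matrix (Fin k) (Fin n) F)
    (C : Submodule F (Fin n → F))
    (hspan : C = Submodule.span F (Set.range fun i => G i))
    (hind : LinearIndependent F fun i => G i) :
    ((C : Set (Fin n → F)) ∩ {x | ∀ c ∈ C, ∑ i, x i * σ (c i) = 0} = {0}) ↔
      IsUnit (G * (G.map σ)ᵀ) := by
  classical
  set M := G * (G.map σ)ᵀ with hM
  have hMentry : ∀ j j', M j j' = ∑ i, G j i * σ (G j' i) := by
    intro j j'
    simp [hM, Matrix.mul_apply, Matrix.transpose_apply, Matrix.map_apply]
  have hmem : ∀ x, x ∈ C ↔ ∃ v : Fin k → F, x = Matrix.vecMul v G := by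
    intro x
    rw [hspan, Submodule.mem_span_range_iff_exists_fun]
    constructor
    · rintro ⟨v, hv⟩
      exact ⟨v, by rw [← hv]; ext i; simp [Matrix.vecMul, dotProduct,
        Finset.sum_apply, smul_eq_mul]⟩
    · rintro ⟨v, hv⟩
      exact ⟨v, by rw [hv]; ext i; simp [Matrix.vecMul, dotProduct,
        Finset.sum_apply, smul_eq_mul]⟩
  have key : ∀ (v : Fin k → F) (j : Fin k),
      ∑ i, (Matrix.vecMul v G) i * σ (G j i) = Matrix.vecMul v M j := by
    intro v j
    simp only [Matrix.vecMul, dotProduct, hMentry, Finset.sum_mul,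
      Finset.mul_sum, mul_assoc]
    exact Finset.sum_comm
  -- the dual condition for x, reduced to rows
  have hrow : ∀ j, G j ∈ C := by
    intro j
    rw [hspan]
    exact Submodule.subset_span ⟨j, rfl⟩
  have hdual : ∀ x : Fin n → F, (∀ c ∈ C, ∑ i, x i * σ (c i) = 0) ↔
      (∀ j, ∑ i, x i * σ (G j i) = 0) := by
    intro x
    constructor
    · intro h j; exact h (G j) (hrow j)
    · intro h c hc
      obtain ⟨v, rfl⟩ := (hmem c).1 hc
      have : ∀ i, σ ((Matrix.vecMul v G) i) = ∑ j, σ (v j) * σ (G j i) := by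
        intro i
        simp [Matrix.vecMul, dotProduct, map_sum]
      simp only [this, Finset.mul_sum]
      rw [Finset.sum_comm]
      refine Finset.sum_eq_zero fun j _ => ?_
      have := h j
      calc ∑ i, x i * (σ (v j) * σ (G j i))
          = σ (v j) * ∑ i, x i * σ (G j i) := by
            rw [Finset.mul_sum]; congr 1; ext i; ring
        _ = 0 := by rw [this, mul_zero]
  have hinj : ∀ v : Fin k → F, Matrix.vecMul v G = 0 → v = 0 := by
    intro v hv
    have := Fintype.linearIndependent_iff.1 hind v ?_
    · funext i; exact this i
    · rw [← hv]; ext i; simp [Matrix.vecMul, dotProduct, Finset.sum_apply,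
        smul_eq_mul]
  constructor
  · intro h
    rw [Matrix.isUnit_iff_isUnit_det, isUnit_iff_ne_zero, ne_eq,
      ← Matrix.exists_vecMul_eq_zero_iff]
    rintro ⟨v, hv0, hvM⟩
    apply hv0
    apply hinj
    have hx : Matrix.vecMul v G ∈ (C : Set (Fin n → F)) ∩
        {x | ∀ c ∈ C, ∑ i, x i * σ (c i) = 0} := by
      constructor
      · exact (hmem _).2 ⟨v, rfl⟩
      · rw [Set.mem_setOf_eq, hdual]
        intro j
        rw [key, hvM]
        rfl
    rw [h] at hx
    exact hx
  · intro h
    apply Set.eq_singleton_iff_unique_mem.2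
    constructor
    · exact ⟨Submodule.zero_mem _, fun c _ => by simp⟩
    · rintro x ⟨hxC, hxD⟩
      obtain ⟨v, rfl⟩ := (hmem x).1 hxC
      have hvM : Matrix.vecMul v M = 0 := by
        funext j
        rw [← key]
        exact (hdual _).1 hxD j
      have hdet : M.det ≠ 0 := by
        rw [← isUnit_iff_ne_zero, ← Matrix.isUnit_iff_isUnit_det]; exact h
      have hv0 : v = 0 := by
        by_contra hv
        exact hdet (Matrix.exists_vecMul_eq_zero_iff.1 ⟨v, hv, hvM⟩)
      rw [hv0]
      ext i
      simp [Matrix.vecMul, dotProduct]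
end

section
/- Let F be a finite field, and let U₁ and U₂ be linear codes of length n over F with generator matrices G₁ and G₂, and parity-check matrices H₁ and H₂, respectively. Then U₁ ⊕ U₂ = Fⁿ (i.e., U₁ and U₂ form a linear complementary pair) if and only if the matrix G₁·H₂ᵀ is invertible over F. -/
/-!
Write `U₁` as the row space `{a G₁}` of `G₁` and, by counting dimensions, `U₂` as the kernel
`{x | H₂ x = 0}` of its parity-check matrix. A codeword `a G₁` then lies in `U₂` exactly when
`a (G₁ H₂ᵀ) = 0`, and `a ↦ a G₁` is injective, so `U₁ ∩ U₂ = 0` iff the square matrix `G₁ H₂ᵀ`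
has trivial left kernel, i.e. is invertible. Since `dim U₁ + dim U₂ = n`, trivial intersection
already forces `U₁ + U₂ = Fⁿ`.
-/

open Matrix Module LinearMap

theorem Submodule.inf_eq_bot_and_sup_eq_top_iff {K V : Type*} [DivisionRing K] [AddCommGroup V]
    [Module K V] [FiniteDimensional K V] (s t : Submodule K V)
    (hdim : finrank K V ≤ finrank K s + finrank K t) :
    s ⊓ t = ⊥ ∧ s ⊔ t = ⊤ ↔ s ⊓ t = ⊥ := by
  rw [← disjoint_iff, ← codisjoint_iff, ← isCompl_iff, isCompl_iff_disjoint s t hdim]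

theorem LinearMap.disjoint_range_ker_iff_injective_comp {R M N P : Type*} [Ring R]
    [AddCommGroup M] [AddCommGroup N] [AddCommGroup P] [Module R M] [Module R N] [Module R P]
    {g : M →ₗ[R] N} {f : N →ₗ[R] P} (hg : Function.Injective g) :
    Disjoint (range g) (ker f) ↔ Function.Injective (f ∘ₗ g) := by
  rw [← ker_eq_bot, ker_comp, disjoint_iff, ← Submodule.map_comap_eq, ← Submodule.map_bot g,
    (Submodule.map_injective_of_injective hg).eq_iff]

namespace Matrix

variable {F m n ι : Type*} [Field F] [Fintype n] [Fintype ι]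

theorem vecMulLinear_mul_transpose (G : Matrix ι n F) (H : Matrix m n F) :
    (G * Hᵀ).vecMulLinear = H.mulVecLin ∘ₗ G.vecMulLinear := by
  ext1 a
  simp only [vecMulLinear_apply, coe_comp, Function.comp_apply, mulVecLin_apply, ← vecMul_vecMul,
    vecMul_transpose]

theorem disjoint_range_vecMulLinear_ker_mulVecLin_iff {G : Matrix ι n F} (H : Matrix m n F)
    (hG : LinearIndependent F G.row) :
    Disjoint (range G.vecMulLinear) (ker H.mulVecLin) ↔ Function.Injective (G * Hᵀ).vecMul := by
  rw [disjoint_range_ker_iff_injective_comp (vecMul_injective_iff.mpr hG),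
    ← vecMulLinear_mul_transpose]
  rfl

variable [Fintype m]

theorem finrank_ker_mulVecLin_add_card {H : Matrix m n F} (hH : LinearIndependent F H.row) :
    finrank F (ker H.mulVecLin) + Fintype.card m = Fintype.card n := by
  rw [← hH.rank_matrix, add_comm, Matrix.rank, finrank_range_add_finrank_ker, finrank_pi]

theorem eq_ker_mulVecLin_of_row_orthogonal {U : Submodule F (n → F)} {H : Matrix m n F}
    (horth : ∀ i, ∀ c ∈ U, H i ⬝ᵥ c = 0) (hH : LinearIndependent F H.row)
    (hdim : finrank F U + Fintype.card m = Fintype.card n) :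
    U = ker H.mulVecLin := by
  refine Submodule.eq_of_le_of_finrank_eq (fun c hc => funext fun i => horth i c hc) ?_
  have := finrank_ker_mulVecLin_add_card hH
  omega

end Matrix

theorem stmt4_general {F : Type*} [Field F] (n k : ℕ) (hk : k ≤ n)
    (U₁ U₂ : Submodule F (Fin n → F))
    (G₁ : Matrix (Fin k) (Fin n) F) (G₂ : Matrix (Fin (n - k)) (Fin n) F)
    (H₂ : Matrix (Fin k) (Fin n) F)
    (hG₁ : U₁ = Submodule.span F (Set.range fun i => G₁ i))
    (hG₁ind : LinearIndependent F fun i => G₁ i)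
    (hG₂ : U₂ = Submodule.span F (Set.range fun i => G₂ i))
    (hG₂ind : LinearIndependent F fun i => G₂ i)
    (hH₂ : (Submodule.span F (Set.range fun i => H₂ i) : Set (Fin n → F)) =
      {x | ∀ c ∈ U₂, ∑ j, x j * c j = 0})
    (hH₂ind : LinearIndependent F fun i => H₂ i) :
    (U₁ ⊓ U₂ = ⊥ ∧ U₁ ⊔ U₂ = ⊤) ↔ IsUnit (G₁ * H₂ᵀ) := by
  have hdim₁ : finrank F U₁ = k := by
    rw [hG₁, finrank_span_eq_card hG₁ind, Fintype.card_fin]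
  have hdim₂ : finrank F U₂ = n - k := by
    rw [hG₂, finrank_span_eq_card hG₂ind, Fintype.card_fin]
  have hU₁ : U₁ = range G₁.vecMulLinear := hG₁.trans (range_vecMulLinear G₁).symm
  have hU₂ : U₂ = ker H₂.mulVecLin := by
    refine eq_ker_mulVecLin_of_row_orthogonal (fun i => ?_) hH₂ind
      (by rw [hdim₂, Fintype.card_fin, Fintype.card_fin]; omega)
    have hrow : H₂ i ∈ (Submodule.span F (Set.range fun i => H₂ i) : Set (Fin n → F)) :=
      Submodule.subset_span (Set.mem_range_self i)
    rwa [hH₂] at hrow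
  have hdim : finrank F (Fin n → F) ≤ finrank F U₁ + finrank F U₂ := by
    rw [finrank_fin_fun, hdim₁, hdim₂]; omega
  rw [Submodule.inf_eq_bot_and_sup_eq_top_iff U₁ U₂ hdim, ← disjoint_iff,
    ← vecMul_injective_iff_isUnit, hU₁, hU₂]
  exact disjoint_range_vecMulLinear_ker_mulVecLin_iff H₂ hG₁ind

/-- Linear codes `U₁` (dimension `k`, generator `G₁`, parity-check `H₁`) and `U₂`
(dimension `n-k`, generator `G₂`, parity-check `H₂`) over a finite field form an LCP
iff `G₁·H₂ᵀ` is invertible. -/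
theorem stmt4 {F : Type*} [Field F] [Fintype F] (n k : ℕ) (hk : k ≤ n)
    (U₁ U₂ : Submodule F (Fin n → F))
    (G₁ : Matrix (Fin k) (Fin n) F) (G₂ : Matrix (Fin (n - k)) (Fin n) F)
    (H₁ : Matrix (Fin (n - k)) (Fin n) F) (H₂ : Matrix (Fin k) (Fin n) F)
    (hG₁ : U₁ = Submodule.span F (Set.range fun i => G₁ i))
    (hG₁ind : LinearIndependent F fun i => G₁ i)
    (hG₂ : U₂ = Submodule.span F (Set.range fun i => G₂ i))
    (hG₂ind : LinearIndependent F fun i => G₂ i)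
    (hH₁ : (Submodule.span F (Set.range fun i => H₁ i) : Set (Fin n → F)) =
      {x | ∀ c ∈ U₁, ∑ j, x j * c j = 0})
    (hH₁ind : LinearIndependent F fun i => H₁ i)
    (hH₂ : (Submodule.span F (Set.range fun i => H₂ i) : Set (Fin n → F)) =
      {x | ∀ c ∈ U₂, ∑ j, x j * c j = 0})
    (hH₂ind : LinearIndependent F fun i => H₂ i) :
    (U₁ ⊓ U₂ = ⊥ ∧ U₁ ⊔ U₂ = ⊤) ↔ IsUnit (G₁ * H₂ᵀ) :=
  stmt4_general n k hk U₁ U₂ G₁ G₂ H₂ hG₁ hG₁ind hG₂ hG₂ind hH₂ hH₂ind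
end

section
/- Let F be a finite field, and let U₁ and U₂ be linear codes of length n over F with parity-check matrix H₁ of U₁ and generator matrix G₂ of U₂. Then U₁ and U₂ form an LCP if and only if the matrix H₁·G₂ᵀ is invertible over F. -/
open Matrix

/-!
`U₁` is the kernel of `H₁`: it lies in that kernel, and both have dimension `k`. `U₂` is the
image of the injective map `v ↦ v G₂`. Since `(H₁ G₂ᵀ) v = H₁ (v G₂)`, the square matrix `H₁ G₂ᵀ`
is injective exactly when no nonzero vector of `U₂` lies in `U₁`; as `dim U₁ + dim U₂ = n`,
this trivial intersection already forces `U₁ ⊕ U₂ = Fⁿ`.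
-/

theorem LinearMap.injective_comp_iff_disjoint {R M N P : Type*} [Ring R] [AddCommGroup M]
    [AddCommGroup N] [AddCommGroup P] [Module R M] [Module R N] [Module R P]
    {f : M →ₗ[R] N} (g : N →ₗ[R] P) (hf : Function.Injective f) :
    Function.Injective (g ∘ₗ f) ↔ Disjoint (LinearMap.ker g) (LinearMap.range f) := by
  rw [← LinearMap.ker_eq_bot, LinearMap.ker_comp, disjoint_comm, disjoint_iff,
    ← Submodule.map_comap_eq, ← (Submodule.map_injective_of_injective hf).eq_iff,
    Submodule.map_bot]

namespace Matrix

theorem mulVecLin_mul_transpose {R l m n : Type*} [CommSemiring R] [Fintype m] [Fintype n]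
    (H : Matrix l n R) (G : Matrix m n R) :
    (H * Gᵀ).mulVecLin = H.mulVecLin ∘ₗ G.vecMulLinear := by
  ext v : 1
  simp

variable {F m n : Type*} [Field F] [Fintype m]

theorem isUnit_mul_transpose_iff_disjoint [Fintype n] [DecidableEq m] (H G : Matrix m n F)
    (hG : LinearIndependent F G.row) :
    IsUnit (H * Gᵀ) ↔ Disjoint (LinearMap.ker H.mulVecLin) (LinearMap.range G.vecMulLinear) := by
  rw [← mulVec_injective_iff_isUnit, ← coe_mulVecLin, mulVecLin_mul_transpose,
    LinearMap.injective_comp_iff_disjoint _ (vecMul_injective_iff.2 hG)]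

theorem ker_mulVecLin_eq_of_le [Fintype n] {H : Matrix m n F} {U : Submodule F (n → F)}
    (hH : LinearIndependent F H.row) (hU : U ≤ LinearMap.ker H.mulVecLin)
    (hdim : Module.finrank F U + Fintype.card m = Fintype.card n) :
    LinearMap.ker H.mulVecLin = U := by
  refine (Submodule.eq_of_le_of_finrank_le hU ?_).symm
  have hrank : Module.finrank F (LinearMap.range H.mulVecLin) = Fintype.card m := hH.rank_matrix
  have := LinearMap.finrank_range_add_finrank_ker H.mulVecLin
  simp only [Module.finrank_fintype_fun_eq_card] at this
  omega

theorem finrank_range_vecMulLinear {G : Matrix m n F} (hG : LinearIndependent F G.row) :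
    Module.finrank F (LinearMap.range G.vecMulLinear) = Fintype.card m := by
  rw [range_vecMulLinear, finrank_span_eq_card hG]

end Matrix

theorem stmt5_general {F : Type*} [Field F] (n k : ℕ) (hk : k ≤ n)
    (U₁ U₂ : Submodule F (Fin n → F))
    (G₂ : Matrix (Fin (n - k)) (Fin n) F)
    (H₁ : Matrix (Fin (n - k)) (Fin n) F)
    (hU₁ : Module.finrank F U₁ = k)
    (hG₂ : U₂ = Submodule.span F (Set.range fun i => G₂ i))
    (hG₂ind : LinearIndependent F fun i => G₂ i)
    (hH₁ : (Submodule.span F (Set.range fun i => H₁ i) : Set (Fin n → F)) =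
      {x | ∀ c ∈ U₁, ∑ j, x j * c j = 0})
    (hH₁ind : LinearIndependent F fun i => H₁ i) :
    (U₁ ⊓ U₂ = ⊥ ∧ U₁ ⊔ U₂ = ⊤) ↔ IsUnit (H₁ * G₂ᵀ) := by
  have hU₁_le : U₁ ≤ LinearMap.ker H₁.mulVecLin := fun c hc ↦ funext fun i ↦ by
    have hrow : H₁ i ∈ (Submodule.span F (Set.range fun i => H₁ i) : Set (Fin n → F)) :=
      Submodule.subset_span ⟨i, rfl⟩
    rw [hH₁] at hrow
    exact hrow c hc
  have hker : LinearMap.ker H₁.mulVecLin = U₁ :=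
    ker_mulVecLin_eq_of_le hH₁ind hU₁_le (by rw [hU₁, Fintype.card_fin, Fintype.card_fin]; omega)
  have hrange : LinearMap.range G₂.vecMulLinear = U₂ := by
    rw [range_vecMulLinear, hG₂]; rfl
  have hdim : Module.finrank F U₁ + Module.finrank F U₂ = n := by
    rw [hU₁, ← hrange, finrank_range_vecMulLinear hG₂ind]
    rw [Fintype.card_fin]; omega
  rw [← disjoint_iff, ← codisjoint_iff, ← isCompl_iff,
    Submodule.isCompl_iff_disjoint _ _ (by simp [hdim]),
    isUnit_mul_transpose_iff_disjoint _ _ hG₂ind, hker, hrange]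

/-- Linear codes `U₁` (dimension `k`, parity-check `H₁`) and `U₂` (dimension `n-k`,
generator `G₂`) over a finite field form an LCP iff `H₁·G₂ᵀ` is invertible. -/
theorem stmt5 {F : Type*} [Field F] [Fintype F] (n k : ℕ) (hk : k ≤ n)
    (U₁ U₂ : Submodule F (Fin n → F))
    (G₂ : Matrix (Fin (n - k)) (Fin n) F)
    (H₁ : Matrix (Fin (n - k)) (Fin n) F)
    (hU₁ : Module.finrank F U₁ = k)
    (hG₂ : U₂ = Submodule.span F (Set.range fun i => G₂ i))
    (hG₂ind : LinearIndependent F fun i => G₂ i)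
    (hH₁ : (Submodule.span F (Set.range fun i => H₁ i) : Set (Fin n → F)) =
      {x | ∀ c ∈ U₁, ∑ j, x j * c j = 0})
    (hH₁ind : LinearIndependent F fun i => H₁ i) :
    (U₁ ⊓ U₂ = ⊥ ∧ U₁ ⊔ U₂ = ⊤) ↔ IsUnit (H₁ * G₂ᵀ) :=
  stmt5_general n k hk U₁ U₂ G₂ H₁ hU₁ hG₂ hG₂ind hH₁ hH₁ind
end

section
/- Let R be a finite commutative chain ring with maximal ideal γR of nilpotency index e ≥ 2 and residue field R/γR of order q. Let C be a linear code of length n over R generated by the rows of a matrix G = [I_k | A] where all rows have period γ^e. If the reduction modulo γ of the matrix I_k + A·Aᵀ is invertible over the residue field R/γR, then C ∩ C^{⊥} = {0}, where C^{⊥} is the Euclidean dual of C. -/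
open Matrix

/-- Over a finite commutative chain ring `R` with maximal ideal `γR` of nilpotency
index `e ≥ 2`: if a code `C` is generated by the rows of `G = [I_k | A]`, all of
period `γ^e`, and the reduction of `I_k + A·Aᵀ` modulo `γ` is invertible over the
residue field, then `C ∩ C^⊥ = {0}`. -/
theorem stmt8 {R : Type*} [CommRing R] [Finite R] [IsLocalRing R]
    (γ : R) (e : ℕ) (he2 : 2 ≤ e)
    (hmax : IsLocalRing.maximalIdeal R = Ideal.span {γ})
    (he : γ ^ e = 0) (he' : γ ^ (e - 1) ≠ 0)
    (k m : ℕ) (A : Matrix (Fin k) (Fin m) R)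
    (G : Fin k → (Fin k ⊕ Fin m) → R)
    (hG : ∀ i, G i = Sum.elim (fun j => if j = i then (1 : R) else 0) (A i))
    (hper : ∀ i, γ ^ (e - 1) • G i ≠ 0)
    (C : Submodule R ((Fin k ⊕ Fin m) → R))
    (hC : C = Submodule.span R (Set.range G))
    (hinv : IsUnit ((1 + A * Aᵀ).map (Ideal.Quotient.mk (Ideal.span {γ})))) :
    (C : Set ((Fin k ⊕ Fin m) → R)) ∩ {x | ∀ c ∈ C, ∑ j, x j * c j = 0} = {0} := by
  set M : Matrix (Fin k) (Fin k) R := 1 + A * Aᵀ with hMdef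
  -- M has unit determinant
  have hdetq : IsUnit ((Ideal.Quotient.mk (Ideal.span {γ})) M.det) := by
    rw [RingHom.map_det]
    exact (Matrix.isUnit_iff_isUnit_det _).mp hinv
  have hMdet : IsUnit M.det := by
    by_contra h
    have hmem : M.det ∈ Ideal.span {γ} := by
      rw [← hmax]; exact h
    rw [Ideal.Quotient.eq_zero_iff_mem.mpr hmem] at hdetq
    have hne : Ideal.span {γ} ≠ ⊤ := by
      rw [← hmax]; exact (IsLocalRing.maximalIdeal.isMaximal R).ne_top
    haveI := Ideal.Quotient.nontrivial_iff.mpr hne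
    exact not_isUnit_zero hdetq
  -- gram matrix computation
  have hgram : ∀ i l : Fin k, ∑ j, G l j * G i j = M l i := by
    intro i l
    rw [hG i, hG l]
    rw [Fintype.sum_sum_type]
    simp only [Sum.elim_inl, Sum.elim_inr]
    have h1 : ∑ j : Fin k, (if j = l then (1:R) else 0) * (if j = i then (1:R) else 0)
        = if l = i then 1 else 0 := by
      simp [ite_and, Finset.sum_ite_eq', eq_comm]
    rw [h1]
    simp [hMdef, Matrix.add_apply, Matrix.mul_apply, Matrix.one_apply, Matrix.transpose_apply]
  ext x
  simp only [Set.mem_inter_iff, SetLike.mem_coe, Set.mem_setOf_eq, Set.mem_singleton_iff]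
  constructor
  · rintro ⟨hxC, hdual⟩
    have hx' := hxC
    rw [hC, Submodule.mem_span_range_iff_exists_fun] at hx'
    obtain ⟨c, hc⟩ := hx'
    have hGi : ∀ i, G i ∈ C := by
      intro i
      rw [hC]
      exact Submodule.subset_span ⟨i, rfl⟩
    have hMc : ∀ i, M.mulVec c i = 0 := by
      intro i
      have := hdual (G i) (hGi i)
      rw [← hc] at this
      have hsum : ∑ j, (∑ l, c l • G l) j * G i j = ∑ l, M i l * c l := by
        calc ∑ j, (∑ l, c l • G l) j * G i j
            = ∑ j, ∑ l, c l * (G l j * G i j) := by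
              apply Finset.sum_congr rfl
              intro j _
              simp [Finset.sum_apply, Finset.sum_mul, mul_assoc]
          _ = ∑ l, ∑ j, c l * (G l j * G i j) := Finset.sum_comm
          _ = ∑ l, c l * M l i := by
              apply Finset.sum_congr rfl
              intro l _
              rw [← Finset.mul_sum, hgram i l]
          _ = ∑ l, M i l * c l := by
              apply Finset.sum_congr rfl
              intro l _
              have hsymm : M l i = M i l := by
                have : Mᵀ = M := by
                  simp [hMdef, Matrix.transpose_add, Matrix.transpose_mul,
                    Matrix.transpose_transpose]
                calc M l i = Mᵀ i l := rfl
                  _ = M i l := by rw [this]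
              rw [hsymm, mul_comm]
      rw [hsum] at this
      simpa [Matrix.mulVec, dotProduct] using this
    have hc0 : c = 0 := by
      have hMc' : M.mulVec c = 0 := funext hMc
      have : M⁻¹.mulVec (M.mulVec c) = M⁻¹.mulVec 0 := by rw [hMc']
      rwa [Matrix.mulVec_mulVec, Matrix.nonsing_inv_mul M hMdet, Matrix.one_mulVec,
        Matrix.mulVec_zero] at this
    rw [← hc, hc0]
    simp
  · rintro rfl
    refine ⟨by simp [hC], ?_⟩
    intro c _
    simp
end

section
/- Let F be a finite field with |F| > 4 and σ an automorphism of F. Then for every a ∈ F there exists a nonzero w ∈ F with w·σ(w) ≠ −a. -/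
/-- For a finite field `F` with `|F| > 4`, an automorphism `σ` of `F`, and any `a ∈ F`,
there exists a nonzero `w ∈ F` with `w·σ(w) ≠ -a`. -/
theorem stmt15 {F : Type*} [Field F] [Fintype F] (hF : 4 < Fintype.card F)
    (σ : F ≃+* F) (a : F) :
    ∃ w : F, w ≠ 0 ∧ w * σ w ≠ -a := by
  by_contra h
  push_neg at h
  have h1 : (1 : F) * σ 1 = -a := h 1 one_ne_zero
  rw [map_one, mul_one] at h1
  -- so -a = 1
  have hall : ∀ w : F, w ≠ 0 → w * σ w = 1 := by
    intro w hw; rw [h w hw, ← h1]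
  -- key: every w ∉ {0, -1} satisfies w^2 + w + 1 = 0
  have key : ∀ w : F, w ≠ 0 → w ≠ -1 → w * w + w + 1 = 0 := by
    intro w hw0 hwm1
    have hw1 : w + 1 ≠ 0 := by
      intro hc; apply hwm1; linear_combination hc
    have e1 : w * σ w = 1 := hall w hw0
    have e2 : (w + 1) * σ (w + 1) = 1 := hall _ hw1
    rw [map_add, map_one] at e2
    -- (w+1)(σw + 1) = 1 ⇒ σw = -(1+w); with w σw = 1 ⇒ w² + w + 1 = 0
    have hσ : σ w = -(1 + w) := by linear_combination e2 - e1
    rw [hσ] at e1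
    linear_combination -e1
  -- any two distinct roots x,y satisfy x + y = -1
  have sum : ∀ x y : F, x ≠ 0 → x ≠ -1 → y ≠ 0 → y ≠ -1 → x ≠ y → x + y = -1 := by
    intro x y hx0 hx1 hy0 hy1 hxy
    have ex := key x hx0 hx1
    have ey := key y hy0 hy1
    have : (x - y) * (x + y + 1) = 0 := by linear_combination ex - ey
    rcases mul_eq_zero.mp this with hc | hc
    · exact absurd (sub_eq_zero.mp hc) hxy
    · linear_combination hc
  -- find three distinct elements outside {0, -1}
  classical
  set s : Finset F := Finset.univ \ {0, -1} with hs
  have hcard : 3 ≤ s.card := by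
    have : ({0, -1} : Finset F).card ≤ 2 := Finset.card_insert_le _ _ |>.trans (by simp)
    rw [hs, Finset.card_sdiff_of_subset (Finset.subset_univ _), Finset.card_univ]
    omega
  obtain ⟨x, hx⟩ := Finset.card_pos.mp (by omega : 0 < s.card)
  have h2 : 0 < (s.erase x).card := by
    have := Finset.card_erase_of_mem hx; omega
  obtain ⟨y, hy⟩ := Finset.card_pos.mp h2
  have h3 : 0 < ((s.erase x).erase y).card := by
    have := Finset.card_erase_of_mem hx
    have := Finset.card_erase_of_mem hy
    omega
  obtain ⟨z, hz⟩ := Finset.card_pos.mp h3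
  have hys : y ∈ s := Finset.mem_of_mem_erase hy
  have hzs : z ∈ s := Finset.mem_of_mem_erase (Finset.mem_of_mem_erase hz)
  have prop : ∀ w : F, w ∈ s → w ≠ 0 ∧ w ≠ -1 := by
    intro w hw
    simp only [hs, Finset.mem_sdiff, Finset.mem_insert, Finset.mem_singleton] at hw
    exact ⟨fun hc => hw.2 (Or.inl hc), fun hc => hw.2 (Or.inr hc)⟩
  obtain ⟨hx0, hx1⟩ := prop x hx
  obtain ⟨hy0, hy1⟩ := prop y hys
  obtain ⟨hz0, hz1⟩ := prop z hzs
  have hxy : x ≠ y := (Finset.ne_of_mem_erase hy).symm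
  have hxz : x ≠ z := (Finset.ne_of_mem_erase (Finset.mem_of_mem_erase hz)).symm
  have hyz : y ≠ z := (Finset.ne_of_mem_erase hz).symm
  have e1 := sum x y hx0 hx1 hy0 hy1 hxy
  have e2 := sum x z hx0 hx1 hz0 hz1 hxz
  exact hyz (by linear_combination e1 - e2)
end

section
/- Let F be a finite field and C ⊆ Fⁿ a Euclidean LCD code (C ∩ C^⊥ = {0}) of dimension k with generator matrix G. Then the n × n matrix Gᵀ(G·Gᵀ)^{-1}G is well-defined (G·Gᵀ is invertible) and is the matrix of the orthogonal projection of Fⁿ onto C: it is idempotent, its image is C, and its kernel is C^⊥. -/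
/-!
If `z ᵥ* (G * Gᵀ) = 0`, then `z ᵥ* G` lies in the row space `C` and is orthogonal to it, so it
vanishes by the LCD property, and `z = 0` because the rows are independent; hence the Gram matrix
`G * Gᵀ` is invertible. The matrix `P = Gᵀ (G Gᵀ)⁻¹ G` then satisfies `G P = G` and `P Gᵀ = Gᵀ`,
which give `P² = P`, that the image of `x ↦ x P` is the row space, and that `x P = 0` iff
`x Gᵀ = 0`, i.e. iff `x ∈ C^⊥`.
-/

open Matrix

namespace Matrix

variable {m n R K : Type*} [Fintype m] [Fintype n]

section CommRing

variable [CommRing R]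

theorem forall_dotProduct_span_row_eq_zero_iff (G : Matrix m n R) (x : n → R) :
    (∀ c ∈ Submodule.span R (Set.range G.row), x ⬝ᵥ c = 0) ↔ x ᵥ* Gᵀ = 0 := by
  simp only [← range_vecMulLinear, LinearMap.mem_range, vecMulLinear_apply,
    forall_exists_index, forall_apply_eq_imp_iff, ← mulVec_transpose, dotProduct_mulVec]
  exact dotProduct_eq_zero_iff

variable [DecidableEq m]

/-- The projection onto the row space of `G` along its orthogonal complement, when `G * Gᵀ` is
invertible; otherwise `(G * Gᵀ)⁻¹` is the junk value `0` and so is this matrix. -/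
noncomputable def rowSpaceProj (G : Matrix m n R) : Matrix n n R := Gᵀ * (G * Gᵀ)⁻¹ * G

variable {G : Matrix m n R} (hG : IsUnit (G * Gᵀ))
include hG

theorem mul_rowSpaceProj : G * rowSpaceProj G = G := by
  rw [rowSpaceProj, ← Matrix.mul_assoc, ← Matrix.mul_assoc,
    mul_nonsing_inv _ ((isUnit_iff_isUnit_det _).mp hG), Matrix.one_mul]

theorem rowSpaceProj_mul_transpose : rowSpaceProj G * Gᵀ = Gᵀ := by
  rw [rowSpaceProj, Matrix.mul_assoc, nonsing_inv_mul_cancel_right _ _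
    ((isUnit_iff_isUnit_det _).mp hG)]

theorem rowSpaceProj_mul_self : rowSpaceProj G * rowSpaceProj G = rowSpaceProj G := by
  conv_lhs => arg 1; rw [rowSpaceProj]
  rw [Matrix.mul_assoc, mul_rowSpaceProj hG, rowSpaceProj]

theorem range_vecMulLinear_rowSpaceProj :
    LinearMap.range (rowSpaceProj G).vecMulLinear = Submodule.span R (Set.range G.row) := by
  rw [← range_vecMulLinear]
  apply le_antisymm
  · rintro _ ⟨x, rfl⟩
    exact ⟨x ᵥ* (Gᵀ * (G * Gᵀ)⁻¹), vecMul_vecMul _ _ _⟩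
  · rintro _ ⟨y, rfl⟩
    exact ⟨y ᵥ* G, by simp [vecMul_vecMul, mul_rowSpaceProj hG]⟩

theorem vecMul_rowSpaceProj_eq_zero_iff (x : n → R) :
    x ᵥ* rowSpaceProj G = 0 ↔ x ᵥ* Gᵀ = 0 := by
  constructor
  · intro hx
    rw [← rowSpaceProj_mul_transpose hG, ← vecMul_vecMul, hx, zero_vecMul]
  · intro hx
    rw [rowSpaceProj, Matrix.mul_assoc, ← vecMul_vecMul, hx, zero_vecMul]

end CommRing

theorem isUnit_mul_transpose_of_linearIndependent [Field K] [DecidableEq m]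
    {G : Matrix m n K} (hind : LinearIndependent K G.row)
    (hLCD : ∀ x ∈ Submodule.span K (Set.range G.row),
      (∀ c ∈ Submodule.span K (Set.range G.row), x ⬝ᵥ c = 0) → x = 0) :
    IsUnit (G * Gᵀ) := by
  rw [← vecMul_injective_iff_isUnit, ← coe_vecMulLinear, ← LinearMap.ker_eq_bot,
    LinearMap.ker_eq_bot']
  intro z hz
  have hzG : z ᵥ* G = 0 := by
    refine hLCD _ (range_vecMulLinear G ▸ ⟨z, rfl⟩) ?_
    rw [forall_dotProduct_span_row_eq_zero_iff, vecMul_vecMul]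
    exact hz
  exact (vecMul_injective_iff.mpr hind) (hzG.trans (zero_vecMul G).symm)

end Matrix

theorem stmt17_general {F : Type*} [Field F] (n k : ℕ)
    (G : Matrix (Fin k) (Fin n) F)
    (C : Submodule F (Fin n → F))
    (hC : C = Submodule.span F (Set.range fun i => G i))
    (hGind : LinearIndependent F fun i => G i)
    (hLCD : (C : Set (Fin n → F)) ∩ {x | ∀ c ∈ C, ∑ j, x j * c j = 0} = {0}) :
    IsUnit (G * Gᵀ) ∧
      (Gᵀ * (G * Gᵀ)⁻¹ * G) * (Gᵀ * (G * Gᵀ)⁻¹ * G) = Gᵀ * (G * Gᵀ)⁻¹ * G ∧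
      LinearMap.range (Gᵀ * (G * Gᵀ)⁻¹ * G).vecMulLinear = C ∧
      (LinearMap.ker (Gᵀ * (G * Gᵀ)⁻¹ * G).vecMulLinear : Set (Fin n → F)) =
        {x | ∀ c ∈ C, ∑ j, x j * c j = 0} := by
  subst hC
  have hunit : IsUnit (G * Gᵀ) :=
    isUnit_mul_transpose_of_linearIndependent hGind fun x hx hx' =>
      hLCD.subset ⟨hx, hx'⟩
  refine ⟨hunit, rowSpaceProj_mul_self hunit, range_vecMulLinear_rowSpaceProj hunit, ?_⟩
  ext x
  exact (vecMul_rowSpaceProj_eq_zero_iff hunit x).trans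
    (forall_dotProduct_span_row_eq_zero_iff G x).symm

/-- For a Euclidean LCD code `C ⊆ Fⁿ` with generator matrix `G`, the matrix `G·Gᵀ` is
invertible and `Gᵀ(G·Gᵀ)⁻¹G` is the matrix of the orthogonal projection of `Fⁿ` onto
`C`: it is idempotent, its image is `C`, and its kernel is `C^⊥`. -/
theorem stmt17 {F : Type*} [Field F] [Fintype F] (n k : ℕ)
    (G : Matrix (Fin k) (Fin n) F)
    (C : Submodule F (Fin n → F))
    (hC : C = Submodule.span F (Set.range fun i => G i))
    (hGind : LinearIndependent F fun i => G i)
    (hLCD : (C : Set (Fin n → F)) ∩ {x | ∀ c ∈ C, ∑ j, x j * c j = 0} = {0}) :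
    IsUnit (G * Gᵀ) ∧
      (Gᵀ * (G * Gᵀ)⁻¹ * G) * (Gᵀ * (G * Gᵀ)⁻¹ * G) = Gᵀ * (G * Gᵀ)⁻¹ * G ∧
      LinearMap.range (Gᵀ * (G * Gᵀ)⁻¹ * G).vecMulLinear = C ∧
      (LinearMap.ker (Gᵀ * (G * Gᵀ)⁻¹ * G).vecMulLinear : Set (Fin n → F)) =
        {x | ∀ c ∈ C, ∑ j, x j * c j = 0} :=
  stmt17_general n k G C hC hGind hLCD
end
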